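/- Let τ be a C² function on a punctured disk such that ∂∂̄(τ) ≥ 0 (τ is subharmonic) on 0 < |z| ≤ r₀, and suppose |τ(z)| ≲ |z|^{2−2a} for some 1/2 < a < 1 (so τ(z) → 0 as z → 0). Then, with τ̃(r) = ∫₀^{2π} τ(r, φ) dφ, the limit lim_{r→0} r · dτ̃/dr exists and equals 0, and consequently lim over ε > δ → 0 of ∫_{δ<|z|<ε} (√−1/2) ∂∂̄τ = 0. -/

import Mathlib

/-!
Let `H(r) = r τ̃'(r)`; it is `2π` times the mean over the circle `|z| = r` of the Euler derivative
`z·∇τ = r ∂τ/∂r`. The polar form `r²Δ = (r∂_r)² + ∂_θ²` of the Laplacian, together with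
`∫₀^{2π} ∂_θ²τ dθ = 0`, gives `H'(r) = r ∫₀^{2π} Δτ(re^{iθ}) dθ ≥ 0`, so `H` is monotone on
`(0, r₀)` and has a limit `ℓ` at `0⁺`. If `ℓ ≠ 0`, then `H` keeps a fixed sign with `|H| ≥ |ℓ|/2`
near `0`, and `τ̃' = H / r` forces `τ̃` to diverge like `log r`, whereas the decay bound keeps `τ̃`
bounded; hence `ℓ = 0`. In polar coordinates the integral of `∂∂̄τ = Δτ/4` over `δ < |z| < ε` is
`(H(ε) - H(δ))/4`, which therefore tends to `0`.
-/

open Complex MeasureTheory Metric Set Filter Topology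

/-- Wirtinger derivative `∂/∂z̄`. -/
noncomputable def dbar (f : ℂ → ℂ) (z : ℂ) : ℂ :=
  (fderiv ℝ f z 1 + Complex.I * fderiv ℝ f z Complex.I) / 2

/-- Wirtinger derivative `∂/∂z`. -/
noncomputable def dz (f : ℂ → ℂ) (z : ℂ) : ℂ :=
  (fderiv ℝ f z 1 - Complex.I * fderiv ℝ f z Complex.I) / 2

/-- The operator `∂z ∂z̄` applied to a real-valued function. -/
noncomputable def lapC (τ : ℂ → ℝ) (z : ℂ) : ℂ :=
  dbar (dz fun w => (τ w : ℂ)) z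

open scoped Real
open Real (circleAverage)
open Laplacian

theorem hasDerivAt_intervalIntegral_of_continuousOn {E : Type*} [NormedAddCommGroup E]
    [NormedSpace ℝ E] {F F' : ℝ → ℝ → E} {J : Set ℝ} {x₀ a b : ℝ} (hJ : IsOpen J)
    (hx₀ : x₀ ∈ J) (hF : ∀ x ∈ J, Continuous (F x))
    (hF' : ContinuousOn (Function.uncurry F') (J ×ˢ univ))
    (hdiff : ∀ x ∈ J, ∀ t, HasDerivAt (F · t) (F' x t) x) :
    HasDerivAt (fun x => ∫ t in a..b, F x t) (∫ t in a..b, F' x₀ t) x₀ := by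
  obtain ⟨ε, hε, hball⟩ := Metric.isOpen_iff.1 hJ x₀ hx₀
  have hK : closedBall x₀ (ε / 2) ⊆ J :=
    (closedBall_subset_ball (half_lt_self hε)).trans hball
  obtain ⟨C, hC⟩ := ((isCompact_closedBall x₀ (ε / 2)).prod isCompact_uIcc)
    |>.exists_bound_of_continuousOn (hF'.mono (prod_mono hK (subset_univ (uIcc a b))))
  refine (intervalIntegral.hasDerivAt_integral_of_dominated_loc_of_deriv_le
    (bound := fun _ => C) (ball_mem_nhds x₀ (half_pos hε))
    (eventually_of_mem (hJ.mem_nhds hx₀) fun x hx => (hF x hx).aestronglyMeasurable)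
    ((hF x₀ hx₀).intervalIntegrable a b)
    (hF'.comp_continuous (.prodMk_right x₀) fun t => ⟨hx₀, mem_univ t⟩).aestronglyMeasurable
    (ae_of_all _ fun t ht x hx => hC (x, t) ⟨ball_subset_closedBall hx, uIoc_subset_uIcc ht⟩)
    intervalIntegrable_const
    (ae_of_all _ fun t _ x hx => hdiff x (hK (ball_subset_closedBall hx)) t)).2

theorem tendsto_atBot_of_hasDerivAt_of_le {T H : ℝ → ℝ} {c : ℝ} (hc : 0 < c)
    (h : ∀ᶠ x in 𝓝[>] 0, HasDerivAt T (x⁻¹ * H x) x ∧ c ≤ H x) :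
    Tendsto T (𝓝[>] 0) atBot := by
  obtain ⟨u, hu, hsub⟩ := mem_nhdsGT_iff_exists_Ioo_subset.1 h
  -- `T - c log` is nondecreasing near `0`, while `c log x → -∞`.
  have hmono : MonotoneOn (fun x => T x - c * Real.log x) (Ioo 0 u) := by
    have hderiv : ∀ x ∈ Ioo 0 u, HasDerivAt (fun x => T x - c * Real.log x)
        (x⁻¹ * (H x - c)) x := fun x hx =>
      ((hsub hx).1.sub ((Real.hasDerivAt_log hx.1.ne').const_mul c)).congr_deriv (by ring)
    refine monotoneOn_of_hasDerivWithinAt_nonneg (convex_Ioo 0 u)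
      (fun x hx => (hderiv x hx).continuousAt.continuousWithinAt)
      (fun x hx => (hderiv x (interior_subset hx)).hasDerivWithinAt)
      fun x hx => ?_
    have hx := interior_subset hx
    exact mul_nonneg (inv_nonneg.2 hx.1.le) (sub_nonneg.2 (hsub hx).2)
  set x₀ := u / 2
  have hx₀ : x₀ ∈ Ioo 0 u := ⟨half_pos hu, half_lt_self hu⟩
  refine tendsto_atBot_mono' _ ?_
    ((Real.tendsto_log_nhdsGT_zero.const_mul_atBot hc).atBot_add
      (tendsto_const_nhds (x := T x₀ - c * Real.log x₀)))
  filter_upwards [Ioo_mem_nhdsGT hx₀.1] with x hx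
  have := hmono ⟨hx.1, hx.2.trans hx₀.2⟩ hx₀ hx.2.le
  linarith

theorem tendsto_nhds_zero_of_monotoneOn_of_hasDerivAt {T H : ℝ → ℝ} {b M : ℝ} (hb : 0 < b)
    (hT : ∀ x ∈ Ioo 0 b, HasDerivAt T (x⁻¹ * H x) x) (hH : MonotoneOn H (Ioo 0 b))
    (hbdd : ∀ᶠ x in 𝓝[>] 0, |T x| ≤ M) :
    Tendsto H (𝓝[>] 0) (𝓝 0) := by
  have hderiv : ∀ᶠ x in 𝓝[>] 0, HasDerivAt T (x⁻¹ * H x) x :=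
    eventually_of_mem (Ioo_mem_nhdsGT hb) hT
  have not_atBot : ¬ Tendsto T (𝓝[>] 0) atBot := fun h =>
    ((h.eventually (eventually_lt_atBot (-M))).and hbdd).exists.elim fun x hx =>
      by linarith [neg_abs_le (T x)]
  have not_atTop : ¬ Tendsto T (𝓝[>] 0) atTop := fun h =>
    ((h.eventually (eventually_gt_atTop M)).and hbdd).exists.elim fun x hx =>
      by linarith [le_abs_self (T x)]
  refine tendsto_order.2 ⟨fun l hl => ?_, fun l hl => ?_⟩
  · by_contra hfreq
    obtain ⟨y, hyH, hy⟩ := ((not_eventually.1 hfreq).and_eventually (Ioo_mem_nhdsGT hb)).exists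
    refine not_atTop (tendsto_neg_atBot_iff.1 (tendsto_atBot_of_hasDerivAt_of_le (neg_pos.2 hl)
      (T := -T) (H := -H) ?_))
    filter_upwards [hderiv, Ioo_mem_nhdsGT hy.1] with x hxT hx
    refine ⟨by simpa using hxT.neg, ?_⟩
    have := hH ⟨hx.1, hx.2.trans hy.2⟩ hy hx.2.le
    simp only [Pi.neg_apply]
    linarith [not_lt.1 hyH]
  · by_contra hfreq
    refine not_atBot (tendsto_atBot_of_hasDerivAt_of_le (H := H) hl ?_)
    filter_upwards [hderiv, Ioo_mem_nhdsGT hb] with x hxT hx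
    obtain ⟨y, hyH, hy⟩ := ((not_eventually.1 hfreq).and_eventually (Ioo_mem_nhdsGT hx.1)).exists
    exact ⟨hxT, (not_lt.1 hyH).trans (hH ⟨hy.1, hy.2.trans hx.2⟩ hx hy.2.le)⟩

theorem exists_abs_sub_lt_of_tendsto_nhdsGT_zero {H : ℝ → ℝ} (hH : Tendsto H (𝓝[>] 0) (𝓝 0))
    {e : ℝ} (he : 0 < e) : ∃ r₁ > 0, ∀ δ ε, 0 < δ → δ < ε → ε < r₁ → |H ε - H δ| < e := by
  obtain ⟨d, hd, hsmall⟩ := Metric.tendsto_nhdsWithin_nhds.1 hH (e / 2) (half_pos he)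
  refine ⟨d, hd, fun δ ε hδ hδε hε => ?_⟩
  have hsmall' : ∀ r, 0 < r → r < d → |H r| < e / 2 := fun r hr hrd => by
    simpa using hsmall (mem_Ioi.2 hr) (by simpa [abs_of_pos hr] using hrd)
  linarith [abs_sub (H ε) (H δ), hsmall' ε (hδ.trans hδε) hε, hsmall' δ hδ (hδε.trans hε)]

section SecondDerivative

variable {E : Type*} [NormedAddCommGroup E] [NormedSpace ℝ E]

theorem ContinuousLinearMap.apply_self_add_apply_mul_I_self (Q : ℂ →L[ℝ] ℂ →L[ℝ] E) (z : ℂ) :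
    Q z z + Q (z * I) (z * I) = ‖z‖ ^ 2 • (Q 1 1 + Q I I) := by
  have hn : ‖z‖ ^ 2 = z.re ^ 2 + z.im ^ 2 := by
    rw [Complex.sq_norm, Complex.normSq_apply]; ring
  have hzI : z * I = (-z.im) • (1 : ℂ) + z.re • I := by apply Complex.ext <;> simp
  set x := z.re
  set y := z.im
  have hz : z = x • (1 : ℂ) + y • I := by apply Complex.ext <;> simp [x, y]
  clear_value x y
  rw [hzI, hn, hz]
  simp only [map_add, map_smul, add_apply, smul_apply]
  module

theorem hasFDerivAt_fderiv_of_contDiffAt {f : ℂ → E} {z : ℂ} (hf : ContDiffAt ℝ 2 f z) :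
    HasFDerivAt (fderiv ℝ f) (fderiv ℝ (fderiv ℝ f) z) z :=
  ((hf.fderiv_right (m := 1) le_rfl).differentiableAt one_ne_zero).hasFDerivAt

theorem continuousAt_fderiv_fderiv {f : ℂ → E} {z : ℂ} (hf : ContDiffAt ℝ 2 f z) :
    ContinuousAt (fderiv ℝ (fderiv ℝ f)) z :=
  ((hf.fderiv_right (m := 1) le_rfl).fderiv_right (m := 0) le_rfl).continuousAt

theorem laplacian_eq_fderiv_fderiv (f : ℂ → E) (z : ℂ) :
    Δ f z = fderiv ℝ (fderiv ℝ f) z 1 1 + fderiv ℝ (fderiv ℝ f) z I I := by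
  simp [InnerProductSpace.laplacian_eq_iteratedFDeriv_complexPlane, iteratedFDeriv_two_apply]

theorem continuousAt_laplacian {f : ℂ → E} {z : ℂ} (hf : ContDiffAt ℝ 2 f z) :
    ContinuousAt (Δ f) z := by
  have hD2 := continuousAt_fderiv_fderiv hf
  rw [show Δ f = _ from funext (laplacian_eq_fderiv_fderiv f)]
  exact ((hD2.clm_apply continuousAt_const).clm_apply continuousAt_const).add
    ((hD2.clm_apply continuousAt_const).clm_apply continuousAt_const)

/-- The radial derivative `r ∂f/∂r` at `z = r e^{iθ}`. -/
noncomputable def eulerDeriv (f : ℂ → E) (z : ℂ) : E := fderiv ℝ f z z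

theorem eulerDeriv_eulerDeriv {f : ℂ → E} {z : ℂ} (hf : ContDiffAt ℝ 2 f z) :
    eulerDeriv (eulerDeriv f) z = fderiv ℝ (fderiv ℝ f) z z z + eulerDeriv f z := by
  have h := (hasFDerivAt_fderiv_of_contDiffAt hf).clm_apply (hasFDerivAt_id z)
  rw [eulerDeriv, show eulerDeriv f = fun w => fderiv ℝ f w (id w) from rfl, h.fderiv]
  simp [add_comm]

end SecondDerivative

theorem re_lapC_eq {τ : ℂ → ℝ} {z : ℂ} (hτ : ContDiffAt ℝ 2 τ z) :
    (lapC τ z).re = Δ τ z / 4 := by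
  have hD : ∀ᶠ w in 𝓝 z, HasFDerivAt τ (fderiv ℝ τ w) w :=
    (hτ.eventually (by simp)).mono fun w hw =>
      (hw.differentiableAt (by norm_num)).hasFDerivAt
  have hdz : (dz fun w => (τ w : ℂ)) =ᶠ[𝓝 z]
      fun w => 2⁻¹ * ((fderiv ℝ τ w 1 : ℂ) - I * (fderiv ℝ τ w I : ℂ)) := by
    filter_upwards [hD] with w hw
    have : HasFDerivAt (fun w => (τ w : ℂ)) (ofRealCLM.comp (fderiv ℝ τ w)) w :=
      ofRealCLM.hasFDerivAt.comp w hw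
    simp [dz, this.fderiv, div_eq_inv_mul]
  have happly : ∀ v : ℂ, HasFDerivAt (fun w => (fderiv ℝ τ w v : ℂ))
      (ofRealCLM.comp ((ContinuousLinearMap.apply ℝ ℝ v).comp (fderiv ℝ (fderiv ℝ τ) z))) z :=
    fun v => ofRealCLM.hasFDerivAt.comp z
      ((ContinuousLinearMap.apply ℝ ℝ v).hasFDerivAt.comp z (hasFDerivAt_fderiv_of_contDiffAt hτ))
  have hdz' := ((happly 1).sub ((happly I).const_mul I)).const_mul (2⁻¹ : ℂ)
  rw [lapC, dbar, hdz.fderiv_eq.trans hdz'.fderiv]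
  simp [laplacian_eq_fderiv_fderiv]
  ring

section CircleAverage

variable {E : Type*} [NormedAddCommGroup E] [NormedSpace ℝ E]

theorem circleMap_zero_eq_smul (r θ : ℝ) : circleMap 0 r θ = r • circleMap 0 1 θ := by
  simp [circleMap_zero, Complex.real_smul]

theorem hasDerivAt_circleMap_zero_radius (r θ : ℝ) :
    HasDerivAt (circleMap 0 · θ) (circleMap 0 1 θ) r := by
  rw [show (circleMap 0 · θ) = fun s : ℝ => s • circleMap 0 1 θ from
    funext fun s => circleMap_zero_eq_smul s θ]
  simpa using (hasDerivAt_id r).smul_const (circleMap 0 1 θ)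

theorem hasDerivAt_circleAverage_zero {f : ℂ → E} {U : Set ℂ} {J : Set ℝ} {r : ℝ}
    (hU : IsOpen U) (hf : ContDiffOn ℝ 1 f U) (hJ : IsOpen J)
    (hJU : ∀ s ∈ J, sphere (0 : ℂ) |s| ⊆ U) (hr : r ∈ J) (hr₀ : r ≠ 0) :
    HasDerivAt (circleAverage f 0) (r⁻¹ • circleAverage (eulerDeriv f) 0 r) r := by
  have hmem : ∀ s ∈ J, ∀ θ, circleMap 0 s θ ∈ U := fun s hs θ =>
    hJU s hs (circleMap_mem_sphere' 0 s θ)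
  have hderiv := hasDerivAt_intervalIntegral_of_continuousOn (a := 0) (b := 2 * π)
    (F := fun s θ => f (circleMap 0 s θ))
    (F' := fun s θ => fderiv ℝ f (circleMap 0 s θ) (circleMap 0 1 θ)) hJ hr
    (fun s hs => hf.continuousOn.comp_continuous (continuous_circleMap 0 s) (hmem s hs))
    (((hf.continuousOn_fderiv_of_isOpen hU le_rfl).comp
      (Real.circleMap.continuous (c := 0)).continuousOn fun p hp => hmem p.1 hp.1 p.2).clm_apply
        ((continuous_circleMap 0 1).comp continuous_snd).continuousOn)
    fun s hs θ => ((hf.differentiableOn one_ne_zero _ (hmem s hs θ)).differentiableAt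
      (hU.mem_nhds (hmem s hs θ))).hasFDerivAt.comp_hasDerivAt s
        (hasDerivAt_circleMap_zero_radius s θ)
  convert hderiv.const_smul (2 * π)⁻¹ using 1
  · ext s; rfl
  rw [Real.circleAverage_def, smul_comm, ← intervalIntegral.integral_smul]
  congr 1
  refine intervalIntegral.integral_congr fun θ _ => ?_
  simp only [eulerDeriv]
  nth_rewrite 2 [circleMap_zero_eq_smul r θ]
  rw [map_smul, inv_smul_smul₀ hr₀]

theorem circleAverage_eulerDeriv_eulerDeriv [CompleteSpace E] {f : ℂ → E} {r : ℝ}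
    (hf : ∀ z ∈ sphere (0 : ℂ) |r|, ContDiffAt ℝ 2 f z) :
    circleAverage (eulerDeriv (eulerDeriv f)) 0 r = r ^ 2 • circleAverage (Δ f) 0 r := by
  -- `P (circleMap 0 r θ)` is the `θ`-derivative of `Df(z)(iz)`, so it averages to zero.
  set P : ℂ → E := fun z => fderiv ℝ (fderiv ℝ f) z (z * I) (z * I) + fderiv ℝ f z (z * I * I)
  have hD2 : ContinuousOn (fderiv ℝ (fderiv ℝ f)) (sphere 0 |r|) := fun z hz =>
    (continuousAt_fderiv_fderiv (hf z hz)).continuousWithinAt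
  have hDf : ContinuousOn (fderiv ℝ f) (sphere 0 |r|) := fun z hz =>
    (hasFDerivAt_fderiv_of_contDiffAt (hf z hz)).continuousAt.continuousWithinAt
  have hP : CircleIntegrable P 0 r := by
    refine ContinuousOn.circleIntegrable' ?_
    have hmul : ContinuousOn (fun z : ℂ => z * I) (sphere 0 |r|) := by fun_prop
    exact ((hD2.clm_apply hmul).clm_apply hmul).add (hDf.clm_apply (hmul.mul continuousOn_const))
  have hΔ : CircleIntegrable (fun z => r ^ 2 • Δ f z) 0 r :=
    ContinuousOn.circleIntegrable' <| continuousOn_const.smul fun z hz =>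
      (continuousAt_laplacian (hf z hz)).continuousWithinAt
  have hP₀ : circleAverage P 0 r = 0 := by
    have hderiv : ∀ θ, HasDerivAt (fun θ => fderiv ℝ f (circleMap 0 r θ) (circleMap 0 r θ * I))
        (P (circleMap 0 r θ)) θ := fun θ =>
      ((hasFDerivAt_fderiv_of_contDiffAt (hf _ (circleMap_mem_sphere' 0 r θ))).comp_hasDerivAt θ
        (hasDerivAt_circleMap 0 r θ)).clm_apply ((hasDerivAt_circleMap 0 r θ).mul_const I)
    rw [Real.circleAverage_def, intervalIntegral.integral_eq_sub_of_hasDerivAt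
      (fun θ _ => hderiv θ) hP, (periodic_circleMap 0 r).eq, sub_self, smul_zero]
  have hpointwise : EqOn (eulerDeriv (eulerDeriv f)) (fun z => r ^ 2 • Δ f z - P z)
      (sphere 0 |r|) := fun z hz => by
    have hnorm : ‖z‖ ^ 2 = r ^ 2 := by rw [mem_sphere_zero_iff_norm.1 hz, sq_abs]
    have hzII : z * I * I = -z := by rw [mul_assoc, I_mul_I, mul_neg_one]
    have htrace := (fderiv ℝ (fderiv ℝ f) z).apply_self_add_apply_mul_I_self z
    rw [hnorm, ← laplacian_eq_fderiv_fderiv] at htrace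
    rw [eulerDeriv_eulerDeriv (hf z hz)]
    simp only [P, hzII, map_neg, eulerDeriv, ← htrace]
    abel
  rw [Real.circleAverage_congr_sphere hpointwise, Real.circleAverage_fun_sub hΔ hP, hP₀, sub_zero,
    Real.circleAverage_fun_smul]

theorem hasDerivAt_circleAverage_eulerDeriv [CompleteSpace E] {f : ℂ → E} {U : Set ℂ}
    {J : Set ℝ} {r : ℝ} (hU : IsOpen U) (hf : ContDiffOn ℝ 2 f U) (hJ : IsOpen J)
    (hJU : ∀ s ∈ J, sphere (0 : ℂ) |s| ⊆ U) (hr : r ∈ J) (hr₀ : r ≠ 0) :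
    HasDerivAt (circleAverage (eulerDeriv f) 0) (r • circleAverage (Δ f) 0 r) r := by
  have hf' : ContDiffOn ℝ 1 (eulerDeriv f) U :=
    (hf.fderiv_of_isOpen hU (m := 1) le_rfl).clm_apply contDiffOn_id
  refine (hasDerivAt_circleAverage_zero hU hf' hJ hJU hr hr₀).congr_deriv ?_
  rw [circleAverage_eulerDeriv_eulerDeriv fun z hz => hf.contDiffAt (hU.mem_nhds (hJU r hr hz)),
    smul_smul]
  congr 1
  field_simp

theorem polarCoord_symm_eq_circleMap (p : ℝ × ℝ) :
    Complex.polarCoord.symm p = circleMap 0 p.1 p.2 := by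
  simp [circleMap_zero, Complex.exp_mul_I, ← Complex.ofReal_cos, ← Complex.ofReal_sin]

theorem setIntegral_annulus_eq [CompleteSpace E] {g : ℂ → E} {δ ε : ℝ} (hδ : 0 ≤ δ) (hδε : δ ≤ ε)
    (hg : ContinuousOn g {z | δ ≤ ‖z‖ ∧ ‖z‖ ≤ ε}) :
    ∫ z in {w : ℂ | δ < ‖w‖ ∧ ‖w‖ < ε}, g z = ∫ r in δ..ε, (2 * π * r) • circleAverage g 0 r := by
  set S := {w : ℂ | δ < ‖w‖ ∧ ‖w‖ < ε}
  set V := Ioo δ ε ×ˢ Ioo (-π) π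
  have hS : MeasurableSet S :=
    ((isOpen_lt continuous_const continuous_norm).inter
      (isOpen_lt continuous_norm continuous_const)).measurableSet
  have hV : MeasurableSet V := measurableSet_Ioo.prod measurableSet_Ioo
  have hVtarget : V ⊆ polarCoord.target := fun p hp => ⟨hδ.trans_lt hp.1.1, hp.2⟩
  have hindicator : EqOn (fun p : ℝ × ℝ => p.1 • S.indicator g (Complex.polarCoord.symm p))
      (V.indicator fun p => p.1 • g (circleMap 0 p.1 p.2)) polarCoord.target := by
    intro p hp
    rw [polarCoord_target] at hp
    have hmem : Complex.polarCoord.symm p ∈ S ↔ p ∈ V := by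
      simp [S, V, abs_of_pos (show 0 < p.1 from hp.1), hp.2]
    dsimp only
    by_cases hpV : p ∈ V
    · rw [indicator_of_mem hpV, indicator_of_mem (hmem.2 hpV), polarCoord_symm_eq_circleMap]
    · rw [indicator_of_notMem hpV, indicator_of_notMem (mt hmem.1 hpV), smul_zero]
  have hint : IntegrableOn (fun p : ℝ × ℝ => p.1 • g (circleMap 0 p.1 p.2)) V := by
    refine ContinuousOn.integrableOn_compact (isCompact_Icc.prod isCompact_Icc) ?_
      |>.mono_set (prod_mono Ioo_subset_Icc_self Ioo_subset_Icc_self)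
    refine continuous_fst.continuousOn.smul (hg.comp (by fun_prop) fun p hp => ?_)
    simp [abs_of_nonneg (hδ.trans hp.1.1), hp.1.1, hp.1.2]
  have hcircle : ∀ r, ∫ θ in Ioo (-π) π, r • g (circleMap 0 r θ) =
      (2 * π * r) • circleAverage g 0 r := fun r => by
    rw [integral_smul, ← integral_Ioc_eq_integral_Ioo, ← intervalIntegral.integral_of_le
      (by linarith [Real.pi_pos]), Real.circleAverage_def, smul_smul,
      show 2 * π * r * (2 * π)⁻¹ = r by field_simp]
    have := (periodic_circleMap 0 r).comp g |>.intervalIntegral_add_eq (-π) 0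
    rw [show -π + 2 * π = π by ring, zero_add] at this
    exact congrArg (r • ·) this
  calc ∫ z in S, g z = ∫ z, S.indicator g z := (integral_indicator hS).symm
    _ = ∫ p in polarCoord.target, p.1 • S.indicator g (Complex.polarCoord.symm p) :=
      (Complex.integral_comp_polarCoord_symm _).symm
    _ = ∫ p in V, p.1 • g (circleMap 0 p.1 p.2) := by
      rw [setIntegral_congr_fun polarCoord.open_target.measurableSet hindicator,
        setIntegral_indicator hV, inter_eq_right.2 hVtarget]
    _ = ∫ r in Ioo δ ε, ∫ θ in Ioo (-π) π, r • g (circleMap 0 r θ) := by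
      rw [Measure.volume_eq_prod] at hint ⊢
      exact setIntegral_prod _ hint
    _ = ∫ r in δ..ε, (2 * π * r) • circleAverage g 0 r := by
      simp_rw [hcircle]
      rw [intervalIntegral.integral_of_le hδε, integral_Ioc_eq_integral_Ioo]

theorem abs_circleAverage_le {f : ℂ → ℝ} {c : ℂ} {R M : ℝ} (hf : CircleIntegrable f c R)
    (h : ∀ z ∈ sphere c |R|, |f z| ≤ M) : |circleAverage f c R| ≤ M :=
  Real.abs_circleAverage_le_circleAverage_abs.trans
    (Real.circleAverage_mono_on_of_le_circle hf.abs h)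

end CircleAverage

section PuncturedDisk

variable {τ : ℂ → ℝ} {R : ℝ}

theorem isOpen_puncturedDisk : IsOpen {z : ℂ | 0 < ‖z‖ ∧ ‖z‖ < R} :=
  (isOpen_lt continuous_const continuous_norm).inter (isOpen_lt continuous_norm continuous_const)

theorem sphere_subset_puncturedDisk {s : ℝ} (hs : s ∈ Ioo 0 R) :
    sphere (0 : ℂ) |s| ⊆ {z : ℂ | 0 < ‖z‖ ∧ ‖z‖ < R} := fun z hz => by
  rw [mem_sphere_zero_iff_norm, abs_of_pos hs.1] at hz
  exact ⟨hz ▸ hs.1, hz ▸ hs.2⟩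

theorem hasDerivAt_circleAverage_of_puncturedDisk
    (hτ : ContDiffOn ℝ 2 τ {z : ℂ | 0 < ‖z‖ ∧ ‖z‖ < R}) {r : ℝ} (hr : r ∈ Ioo 0 R) :
    HasDerivAt (circleAverage τ 0) (r⁻¹ * circleAverage (eulerDeriv τ) 0 r) r :=
  hasDerivAt_circleAverage_zero isOpen_puncturedDisk (hτ.of_le one_le_two) isOpen_Ioo
    (fun _ => sphere_subset_puncturedDisk) hr hr.1.ne'

theorem monotoneOn_circleAverage_eulerDeriv
    (hτ : ContDiffOn ℝ 2 τ {z : ℂ | 0 < ‖z‖ ∧ ‖z‖ < R})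
    (hsub : ∀ z ∈ {z : ℂ | 0 < ‖z‖ ∧ ‖z‖ < R}, 0 ≤ Δ τ z) :
    MonotoneOn (circleAverage (eulerDeriv τ) 0) (Ioo 0 R) := by
  have hderiv := fun r (hr : r ∈ Ioo 0 R) => hasDerivAt_circleAverage_eulerDeriv
    isOpen_puncturedDisk hτ isOpen_Ioo (fun _ => sphere_subset_puncturedDisk) hr hr.1.ne'
  refine monotoneOn_of_hasDerivWithinAt_nonneg (convex_Ioo 0 R)
    (fun r hr => (hderiv r hr).continuousAt.continuousWithinAt)
    (fun r hr => (hderiv r (interior_subset hr)).hasDerivWithinAt) fun r hr => ?_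
  rw [interior_Ioo] at hr
  exact smul_nonneg hr.1.le (Real.circleAverage_nonneg_of_nonneg fun z hz =>
    hsub z (sphere_subset_puncturedDisk hr hz))

theorem tendsto_circleAverage_eulerDeriv_nhdsGT_zero (hR : 0 < R)
    (hτ : ContDiffOn ℝ 2 τ {z : ℂ | 0 < ‖z‖ ∧ ‖z‖ < R})
    (hsub : ∀ z ∈ {z : ℂ | 0 < ‖z‖ ∧ ‖z‖ < R}, 0 ≤ Δ τ z) {M : ℝ}
    (hbdd : ∀ᶠ r in 𝓝[>] 0, |circleAverage τ 0 r| ≤ M) :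
    Tendsto (circleAverage (eulerDeriv τ) 0) (𝓝[>] 0) (𝓝 0) :=
  tendsto_nhds_zero_of_monotoneOn_of_hasDerivAt hR
    (fun _ hr => hasDerivAt_circleAverage_of_puncturedDisk hτ hr)
    (monotoneOn_circleAverage_eulerDeriv hτ hsub) hbdd

theorem setIntegral_annulus_re_lapC (hτ : ContDiffOn ℝ 2 τ {z : ℂ | 0 < ‖z‖ ∧ ‖z‖ < R})
    {δ ε : ℝ} (hδ : 0 < δ) (hδε : δ ≤ ε) (hε : ε < R) :
    ∫ z in {w : ℂ | δ < ‖w‖ ∧ ‖w‖ < ε}, (lapC τ z).re =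
      π / 2 * (circleAverage (eulerDeriv τ) 0 ε - circleAverage (eulerDeriv τ) 0 δ) := by
  have hC2 : ∀ z ∈ {z : ℂ | δ ≤ ‖z‖ ∧ ‖z‖ ≤ ε}, ContDiffAt ℝ 2 τ z := fun z hz =>
    hτ.contDiffAt (isOpen_puncturedDisk.mem_nhds ⟨hδ.trans_le hz.1, hz.2.trans_lt hε⟩)
  have hΔ : ContinuousOn (Δ τ) {z : ℂ | δ ≤ ‖z‖ ∧ ‖z‖ ≤ ε} := fun z hz =>
    (continuousAt_laplacian (hC2 z hz)).continuousWithinAt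
  have hradius : ∀ r ∈ uIcc δ ε, r ∈ Ioo 0 R := fun r hr => by
    rw [uIcc_of_le hδε] at hr
    exact ⟨hδ.trans_le hr.1, hr.2.trans_lt hε⟩
  have hderiv : ∀ r ∈ uIcc δ ε, HasDerivAt (circleAverage (eulerDeriv τ) 0)
      (r • circleAverage (Δ τ) 0 r) r := fun r hr =>
    hasDerivAt_circleAverage_eulerDeriv isOpen_puncturedDisk hτ isOpen_Ioo
      (fun _ => sphere_subset_puncturedDisk) (hradius r hr) (hradius r hr).1.ne'
  have hcont : ContinuousOn (fun r => r • circleAverage (Δ τ) 0 r) (uIcc δ ε) := by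
    rw [uIcc_of_le hδε]
    exact continuousOn_id.smul
      (Real.ContinuousOn.circleAverage (by simpa using hΔ) fun r hr => hδ.le.trans hr.1)
  rw [setIntegral_annulus_eq hδ.le hδε ((hΔ.div_const 4).congr fun z hz => re_lapC_eq (hC2 z hz)),
    ← intervalIntegral.integral_eq_sub_of_hasDerivAt hderiv hcont.intervalIntegrable,
    ← intervalIntegral.integral_const_mul]
  refine intervalIntegral.integral_congr fun r hr => ?_
  have hsphere : EqOn (fun z => (lapC τ z).re) (fun z => (4 : ℝ)⁻¹ • Δ τ z) (sphere 0 |r|) :=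
    fun z hz => by
      show (lapC τ z).re = 4⁻¹ • Δ τ z
      rw [re_lapC_eq (hτ.contDiffAt (isOpen_puncturedDisk.mem_nhds
        (sphere_subset_puncturedDisk (hradius r hr) hz))), smul_eq_mul, div_eq_inv_mul]
  rw [Real.circleAverage_congr_sphere hsphere, Real.circleAverage_fun_smul, smul_eq_mul,
    smul_eq_mul, smul_eq_mul]
  ring

theorem mul_deriv_circleAverage (hτ : ContDiffOn ℝ 2 τ {z : ℂ | 0 < ‖z‖ ∧ ‖z‖ < R}) {r : ℝ}
    (hr : r ∈ Ioo 0 R) : r * deriv (circleAverage τ 0) r = circleAverage (eulerDeriv τ) 0 r := by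
  rw [(hasDerivAt_circleAverage_of_puncturedDisk hτ hr).deriv, mul_inv_cancel_left₀ hr.1.ne']

theorem eventually_abs_circleAverage_le (hR : 0 < R)
    (hτ : ContinuousOn τ {z : ℂ | 0 < ‖z‖ ∧ ‖z‖ < R}) {C p : ℝ} (hp : 0 ≤ p)
    (hdecay : ∀ z ∈ {z : ℂ | 0 < ‖z‖ ∧ ‖z‖ < R}, |τ z| ≤ C * ‖z‖ ^ p) :
    ∀ᶠ r in 𝓝[>] 0, |circleAverage τ 0 r| ≤ |C| := by
  filter_upwards [Ioo_mem_nhdsGT (lt_min one_pos hR)] with r hr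
  have hr' : r ∈ Ioo 0 R := ⟨hr.1, hr.2.trans_le (min_le_right _ _)⟩
  refine abs_circleAverage_le (ContinuousOn.circleIntegrable'
    (hτ.mono (sphere_subset_puncturedDisk hr'))) fun z hz => ?_
  have hz1 : ‖z‖ ≤ 1 := by
    rw [mem_sphere_zero_iff_norm.1 hz, abs_of_pos hr.1]
    exact hr.2.le.trans (min_le_left _ _)
  calc |τ z| ≤ C * ‖z‖ ^ p := hdecay z (sphere_subset_puncturedDisk hr' hz)
    _ ≤ |C| * 1 := mul_le_mul (le_abs_self C) (Real.rpow_le_one (norm_nonneg z) hz1 hp)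
        (by positivity) (abs_nonneg C)
    _ = |C| := mul_one _

end PuncturedDisk

theorem subharmonic_annulus_integral_vanishing_general (a : ℝ) (ha2 : a < 1)
    (r0 : ℝ) (hr0 : 0 < r0) (τ : ℂ → ℝ)
    (hτ : ContDiffOn ℝ 2 (fun w => (τ w : ℂ)) {z : ℂ | 0 < ‖z‖ ∧ ‖z‖ ≤ r0})
    (hsub : ∀ z : ℂ, 0 < ‖z‖ → ‖z‖ ≤ r0 → 0 ≤ (lapC τ z).re)
    (Cτ : ℝ) (hdecay : ∀ z : ℂ, 0 < ‖z‖ → ‖z‖ ≤ r0 → |τ z| ≤ Cτ * ‖z‖ ^ (2 - 2 * a)) :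
    Tendsto
      (fun r : ℝ => r * deriv
        (fun r' : ℝ => ∫ θ in (0 : ℝ)..2 * Real.pi,
          τ ((r' : ℂ) * Complex.exp (θ * Complex.I))) r)
      (nhdsWithin 0 (Set.Ioi 0)) (nhds 0) ∧
    ∀ e : ℝ, 0 < e → ∃ r1 : ℝ, 0 < r1 ∧ ∀ δ ε : ℝ, 0 < δ → δ < ε → ε < r1 →
      |∫ z in {w : ℂ | δ < ‖w‖ ∧ ‖w‖ < ε}, (lapC τ z).re| < e := by
  have hτU : ContDiffOn ℝ 2 τ {z : ℂ | 0 < ‖z‖ ∧ ‖z‖ < r0} := by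
    have h := (reCLM.contDiff.comp_contDiffOn hτ).mono
      fun z (hz : z ∈ {z : ℂ | 0 < ‖z‖ ∧ ‖z‖ < r0}) => ⟨hz.1, hz.2.le⟩
    rwa [show (reCLM ∘ fun w => (τ w : ℂ)) = τ from funext fun w => by simp] at h
  have hΔ : ∀ z ∈ {z : ℂ | 0 < ‖z‖ ∧ ‖z‖ < r0}, 0 ≤ Δ τ z := fun z hz => by
    have := re_lapC_eq (hτU.contDiffAt (isOpen_puncturedDisk.mem_nhds hz))
    linarith [hsub z hz.1 hz.2.le]
  have hlim := tendsto_circleAverage_eulerDeriv_nhdsGT_zero hr0 hτU hΔ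
    (eventually_abs_circleAverage_le hr0 hτU.continuousOn (by linarith)
      fun z hz => hdecay z hz.1 hz.2.le)
  have hT : (fun r' : ℝ => ∫ θ in (0 : ℝ)..2 * π, τ ((r' : ℂ) * exp (θ * I))) =
      fun r' => 2 * π * circleAverage τ 0 r' := funext fun r' => by
    rw [Real.circleAverage_def, smul_eq_mul, ← mul_assoc,
      mul_inv_cancel₀ Real.two_pi_pos.ne', one_mul]
    simp_rw [circleMap_zero]
  refine ⟨?_, fun e he => ?_⟩
  · have h2π := hlim.const_mul (2 * π)
    rw [mul_zero] at h2π
    refine h2π.congr' ?_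
    filter_upwards [Ioo_mem_nhdsGT hr0] with r hr
    rw [hT, deriv_const_mul_field', mul_left_comm, mul_deriv_circleAverage hτU hr]
  · obtain ⟨r₁, hr₁, hsmall⟩ := exists_abs_sub_lt_of_tendsto_nhdsGT_zero hlim
      (by positivity : 0 < 2 * e / π)
    refine ⟨min r₁ r0, lt_min hr₁ hr0, fun δ ε hδ hδε hε => ?_⟩
    rw [setIntegral_annulus_re_lapC hτU hδ hδε.le (hε.trans_le (min_le_right _ _)), abs_mul,
      abs_of_pos (by positivity : 0 < π / 2)]
    calc π / 2 * |_| < π / 2 * (2 * e / π) := by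
          gcongr; exact hsmall δ ε hδ hδε (hε.trans_le (min_le_left _ _))
      _ = e := by field_simp

/-- Let `τ` be `C²` and subharmonic (`∂∂̄ τ ≥ 0`) on a punctured disk `0 < |z| ≤ r₀`, with
`|τ(z)| ≲ |z|^{2-2a}` for some `1/2 < a < 1`.  Then, with `τ̃(r) = ∫₀^{2π} τ(r e^{iφ}) dφ`,
the limit `lim_{r→0} r · dτ̃/dr` exists and equals `0`, and consequently the integrals
`∫_{δ<|z|<ε} (√-1/2) ∂∂̄ τ` tend to `0` as `ε > δ → 0`. -/
theorem subharmonic_annulus_integral_vanishing (a : ℝ) (ha1 : 1 / 2 < a) (ha2 : a < 1)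
    (r0 : ℝ) (hr0 : 0 < r0) (τ : ℂ → ℝ)
    (hτ : ContDiffOn ℝ 2 (fun w => (τ w : ℂ)) {z : ℂ | 0 < ‖z‖ ∧ ‖z‖ ≤ r0})
    (hsub : ∀ z : ℂ, 0 < ‖z‖ → ‖z‖ ≤ r0 → 0 ≤ (lapC τ z).re)
    (Cτ : ℝ) (hdecay : ∀ z : ℂ, 0 < ‖z‖ → ‖z‖ ≤ r0 → |τ z| ≤ Cτ * ‖z‖ ^ (2 - 2 * a)) :
    Tendsto
      (fun r : ℝ => r * deriv
        (fun r' : ℝ => ∫ θ in (0 : ℝ)..2 * Real.pi,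
          τ ((r' : ℂ) * Complex.exp (θ * Complex.I))) r)
      (nhdsWithin 0 (Set.Ioi 0)) (nhds 0) ∧
    ∀ e : ℝ, 0 < e → ∃ r1 : ℝ, 0 < r1 ∧ ∀ δ ε : ℝ, 0 < δ → δ < ε → ε < r1 →
      |∫ z in {w : ℂ | δ < ‖w‖ ∧ ‖w‖ < ε}, (lapC τ z).re| < e :=
  subharmonic_annulus_integral_vanishing_general a ha2 r0 hr0 τ hτ hsub Cτ hdecay
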